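/- Let g be a Lie algebra over a field k and let r : g → n_n(k) be a flag homomorphism (λ_{i,i+1} ≠ 0 for every i = 1,…,n−1). If b ∈ GL_n(k) satisfies b·r(v) = r(v)·b for all v ∈ g, then b is upper triangular and all of its diagonal entries are equal; consequently b = a·u with a ∈ k^× a scalar and u an upper triangular matrix with all diagonal entries equal to 1 commuting with every r(v). -/

import Mathlib

attribute [local instance 100] LieRing.ofAssociativeRing

/-! Let `b` commute with a family of strictly upper triangular matrices `N a` whose
superdiagonal entries are not all zero. Comparing the `(p, j)` entries of `b * N a` and
`N a * b`, where `p ⋖ q` and `N a p q ≠ 0`, shows by induction (columns from left to right,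
rows from bottom to top) that `b q j = 0` for `j < q`; for `j = q` the same comparison gives
`b p p = b q q`. Since `det b = ∏ i, b i i` is a unit, so is the common diagonal entry `a`,
and `b = a • (a⁻¹ • b)`. -/

theorem eq_of_forall_covBy {α β : Type*} [LinearOrder α] [LocallyFiniteOrder α] {f : α → β}
    (hf : ∀ ⦃p q⦄, p ⋖ q → f p = f q) (i j : α) : f i = f j := by
  wlog hij : i ≤ j generalizing i j
  · exact (this j i (le_of_not_ge hij)).symm
  have hchain := le_iff_reflTransGen_covBy.mp hij
  clear hij
  induction hchain with
  | refl => rfl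
  | tail _ hcov ih => exact ih.trans (hf hcov)

namespace Matrix

def IsStrictUpperTriangular {m R : Type*} [LE m] [Zero R] (N : Matrix m m R) : Prop :=
  ∀ ⦃i j⦄, j ≤ i → N i j = 0

section EntryFormulas

variable {m R : Type*} [Fintype m] [LinearOrder m] [NonUnitalNonAssocSemiring R]
  {N b : Matrix m m R}

theorem IsStrictUpperTriangular.mul_apply_of_covBy (hN : N.IsStrictUpperTriangular)
    {p q j : m} (hpq : p ⋖ q) (hb : ∀ l, q < l → b l j = 0) :
    (N * b) p j = N p q * b q j := by
  rw [mul_apply]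
  refine Finset.sum_eq_single q (fun l _ hlq => ?_) (by simp)
  rcases le_or_gt l p with hlp | hpl
  · rw [hN hlp, zero_mul]
  · rw [hb l ((hpq.ge_of_gt hpl).lt_of_ne' hlq), mul_zero]

theorem IsStrictUpperTriangular.mul_apply_diag_of_covBy (hN : N.IsStrictUpperTriangular)
    {p q : m} (hpq : p ⋖ q) (hb : ∀ l < p, b p l = 0) :
    (b * N) p q = b p p * N p q := by
  rw [mul_apply]
  refine Finset.sum_eq_single p (fun l _ hlp => ?_) (by simp)
  rcases lt_or_gt_of_ne hlp with hlp | hpl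
  · rw [hb l hlp, zero_mul]
  · rw [hN (hpq.ge_of_gt hpl), mul_zero]

theorem IsStrictUpperTriangular.mul_apply_eq_zero (hN : N.IsStrictUpperTriangular)
    {p j : m} (hb : ∀ l < j, b p l = 0) : (b * N) p j = 0 :=
  (mul_apply ..).trans <| Finset.sum_eq_zero fun l _ => by
    rcases lt_or_ge l j with hlj | hjl
    · rw [hb l hlj, zero_mul]
    · rw [hN hjl, mul_zero]

end EntryFormulas

section Commutant

variable {m R ι : Type*} [Fintype m] [LinearOrder m] [LocallyFiniteOrder m]
  [CommRing R] [NoZeroDivisors R] {N : ι → Matrix m m R} {b : Matrix m m R}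

theorem isUpperTriangular_of_commute (hN : ∀ a, (N a).IsStrictUpperTriangular)
    (hsuper : ∀ ⦃p q⦄, p ⋖ q → ∃ a, N a p q ≠ 0) (hb : ∀ a, Commute b (N a)) :
    b.IsUpperTriangular := by
  suffices ∀ j i : m, j < i → b i j = 0 from fun i j hji => this j i hji
  intro j
  induction j using WellFoundedLT.induction with | _ j ihj => ?_
  intro i
  induction i using WellFoundedGT.induction with | _ i ihi => ?_
  intro hji
  obtain ⟨p, hjp, hpi⟩ := exists_le_covBy_of_lt hji
  obtain ⟨a, ha⟩ := hsuper hpi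
  have hleft : (b * N a) p j = 0 :=
    (hN a).mul_apply_eq_zero fun l hl => ihj l hl p (hl.trans_le hjp)
  have hright : (N a * b) p j = N a p i * b i j :=
    (hN a).mul_apply_of_covBy hpi fun l hl => ihi l hl (hji.trans hl)
  have := congr_fun₂ (hb a).eq p j
  rw [hleft, hright] at this
  exact (mul_eq_zero.mp this.symm).resolve_left ha

theorem apply_self_eq_of_commute (hN : ∀ a, (N a).IsStrictUpperTriangular)
    (hsuper : ∀ ⦃p q⦄, p ⋖ q → ∃ a, N a p q ≠ 0) (hb : ∀ a, Commute b (N a)) (i j : m) :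
    b i i = b j j := by
  have hup := isUpperTriangular_of_commute hN hsuper hb
  refine eq_of_forall_covBy (f := fun i => b i i) (fun p q hpq => ?_) i j
  obtain ⟨a, ha⟩ := hsuper hpq
  have := congr_fun₂ (hb a).eq p q
  rw [(hN a).mul_apply_diag_of_covBy hpq fun l hl => hup hl,
    (hN a).mul_apply_of_covBy hpq fun l hl => hup hl, mul_comm (b p p)] at this
  exact mul_left_cancel₀ ha this

end Commutant

theorem IsUpperTriangular.isUnit_apply_self {m R : Type*} [Fintype m] [LinearOrder m]
    [DecidableEq m] [CommRing R] {b : Matrix m m R} (hup : b.IsUpperTriangular)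
    (hb : IsUnit b) (i : m) : IsUnit (b i i) := by
  rw [isUnit_iff_isUnit_det, det_of_isUpperTriangular hup, IsUnit.prod_univ_iff] at hb
  exact hb i

end Matrix

/-- Let `r : g → n_n(k)` be a flag homomorphism (the entries `λ_{i,i+1}` are
nonzero functionals).  If `b ∈ GL_n(k)` commutes with every `r v`, then `b` is upper triangular
with all diagonal entries equal; consequently `b = a • u` with `a ∈ kˣ` a scalar and `u`
upper triangular unipotent (all diagonal entries `1`) commuting with every `r v`. -/
theorem stmt_5 {k : Type*} [Field k] {g : Type*} [LieRing g] [LieAlgebra k g] {n : ℕ}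
    (r : g →ₗ⁅k⁆ Matrix (Fin n) (Fin n) k)
    (hr : ∀ (v : g) (i j : Fin n), j ≤ i → r v i j = 0)
    (hflag : ∀ (i : ℕ) (hi : i + 1 < n), ∃ v : g, r v ⟨i, by omega⟩ ⟨i + 1, hi⟩ ≠ 0)
    (b : Matrix (Fin n) (Fin n) k) (hb : IsUnit b)
    (hcomm : ∀ v : g, b * r v = r v * b) :
    (∀ i j : Fin n, j < i → b i j = 0) ∧
    (∀ i j : Fin n, b i i = b j j) ∧
    ∃ (a : kˣ) (u : Matrix (Fin n) (Fin n) k),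
      (∀ i j : Fin n, j < i → u i j = 0) ∧
      (∀ i : Fin n, u i i = 1) ∧
      (∀ v : g, u * r v = r v * u) ∧
      b = (a : k) • u := by
  have hN : ∀ v, (r v).IsStrictUpperTriangular := fun v i j => hr v i j
  have hsuper : ∀ ⦃p q : Fin n⦄, p ⋖ q → ∃ v, r v p q ≠ 0 := by
    rintro ⟨p, hp⟩ ⟨q, hq⟩ hpq
    obtain rfl : p + 1 = q := by simpa using hpq
    exact hflag p hq
  have hup : b.IsUpperTriangular := Matrix.isUpperTriangular_of_commute hN hsuper hcomm
  have hdiag := Matrix.apply_self_eq_of_commute hN hsuper hcomm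
  refine ⟨fun i j => @hup i j, hdiag, ?_⟩
  obtain ⟨a, ha⟩ : ∃ a : kˣ, ∀ i, b i i = a := by
    rcases isEmpty_or_nonempty (Fin n) with _ | ⟨⟨i₀⟩⟩
    · exact ⟨1, isEmptyElim⟩
    · exact ⟨(hup.isUnit_apply_self hb i₀).unit, fun i => hdiag i i₀⟩
  refine ⟨a, (↑a⁻¹ : k) • b, fun i j hji => by simp [hup hji], fun i => by simp [ha],
    fun v => Commute.smul_left (hcomm v) _, by simp [smul_smul]⟩
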